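/- In the polyform model of Cl(2n) on S = ⋀ℂⁿ, R and R' are, up to a complex scalar, the only possible reality conditions: if T : S → S is a nonzero ℂ-antilinear map and there exists ε ∈ {1, −1} such that T ∘ Γ_A = ε · Γ_A ∘ T for all A ∈ {1, …, 2n}, then there exists z ∈ ℂ with T = z·R or T = z·R', where R := Γ₁ ∘ … ∘ Γ_n ∘ ∗ and R' := Γ_{n+1} ∘ … ∘ Γ_{2n} ∘ ∗. -/

import Mathlib

/-!
An antilinear `T` with `T Γ_A = ε Γ_A T` satisfies `T a_i = ε a_i† T` and `T a_i† = ε a_i T`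
(add and subtract the relations for `Γ_i` and `Γ_{n+i}`; antilinearity turns the factor `i`
of `Γ_{n+i}` into `-i`). Hence `T (e_{i₁} ∧ ⋯ ∧ e_{i_k}) = ε^k a_{i₁}† ⋯ a_{i_k}† (T 1)`, so `T`
is determined by `T 1`, and `T 1` is killed by every `a_i`, which forces
`T 1 ∈ ℂ · e₁ ∧ ⋯ ∧ e_n`. Since `∗` commutes with `Γ_i` and anticommutes with `Γ_{n+i}`,
`R` and `R'` satisfy the same relations with `ε = -(-1)ⁿ` and `ε = (-1)ⁿ` respectively, and
they send `1` to nonzero multiples of `e₁ ∧ ⋯ ∧ e_n`; so `T` is the matching multiple of one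
of them.
-/

/-- The space of polyforms (spinors): the exterior algebra of `ℂⁿ`. -/
noncomputable abbrev Polyform (n : ℕ) := ExteriorAlgebra ℂ (Fin n → ℂ)

/-- The creation operator `a_i`: wedging with the basis one-form `e_i`. -/
noncomputable def crea (n : ℕ) (i : Fin n) : Module.End ℂ (Polyform n) :=
  LinearMap.mulLeft ℂ (ExteriorAlgebra.ι ℂ (Pi.single i 1))

/-- The annihilation operator `a_i†`: interior product (left contraction) with the
`i`-th dual basis vector. -/
noncomputable def anni (n : ℕ) (i : Fin n) : Module.End ℂ (Polyform n) :=
  CliffordAlgebra.contractLeft (Q := (0 : QuadraticForm ℂ (Fin n → ℂ))) (LinearMap.proj i)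

/-- The gamma operators: `Γ_i = a_i + a_i†` and `Γ_{i+n} = I•(a_i − a_i†)` (0-indexed). -/
noncomputable def Gam (n : ℕ) (A : Fin (2 * n)) : Module.End ℂ (Polyform n) :=
  if h : (A : ℕ) < n then crea n ⟨A, h⟩ + anni n ⟨A, h⟩
  else Complex.I • (crea n ⟨(A : ℕ) - n, by have := A.isLt; omega⟩
    - anni n ⟨(A : ℕ) - n, by have := A.isLt; omega⟩)

/-- The basis polyform `e_{i₁} ∧ ⋯ ∧ e_{i_k}` indexed by a list of indices. -/
noncomputable def basisMonomial (n : ℕ) (l : List (Fin n)) : Polyform n :=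
  (l.map fun i => ExteriorAlgebra.ι ℂ (Pi.single i (1 : ℂ))).prod

/-- `st` is the complex conjugation `∗` on polyforms: the `ℂ`-antilinear involution fixing
each basis polyform and conjugating the complex coefficients. -/
def IsConjugation (n : ℕ) (st : Polyform n → Polyform n) : Prop :=
  (∀ x y, st (x + y) = st x + st y) ∧
  (∀ (z : ℂ) (x : Polyform n), st (z • x) = (starRingEnd ℂ) z • st x) ∧
  (∀ l : List (Fin n), st (basisMonomial n l) = basisMonomial n l)

/-- The antilinear operator `R := Γ₁ ∘ ⋯ ∘ Γ_n ∘ ∗`. -/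
noncomputable def Rop (n : ℕ) (st : Polyform n → Polyform n) : Polyform n → Polyform n :=
  fun ψ => (((List.finRange n).map fun i => Gam n (Fin.castLE (by omega) i)).prod) (st ψ)

/-- The antilinear operator `R' := Γ_{n+1} ∘ ⋯ ∘ Γ_{2n} ∘ ∗`. -/
noncomputable def Rop' (n : ℕ) (st : Polyform n → Polyform n) : Polyform n → Polyform n :=
  fun ψ =>
    (((List.finRange n).map fun i => Gam n ⟨n + i.1, by have := i.2; omega⟩).prod) (st ψ)

section AntiCommute

variable {R E : Type*} [CommRing R] [Ring E] [Algebra R E]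

def AntiCommute (a b : E) : Prop := a * b = -(b * a)

namespace AntiCommute

variable {a b c : E}

lemma symm (h : AntiCommute a b) : AntiCommute b a := by
  rw [AntiCommute, h, neg_neg]

lemma add_right (hb : AntiCommute a b) (hc : AntiCommute a c) : AntiCommute a (b + c) := by
  rw [AntiCommute, mul_add, add_mul, hb, hc, neg_add]

lemma sub_right (hb : AntiCommute a b) (hc : AntiCommute a c) : AntiCommute a (b - c) := by
  rw [AntiCommute, mul_sub, sub_mul, hb, hc, neg_sub_neg, neg_sub]

lemma smul_right (r : R) (h : AntiCommute a b) : AntiCommute a (r • b) := by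
  rw [AntiCommute, mul_smul_comm, smul_mul_assoc, h, smul_neg]

lemma add_left (ha : AntiCommute a c) (hb : AntiCommute b c) : AntiCommute (a + b) c :=
  (ha.symm.add_right hb.symm).symm

lemma sub_left (ha : AntiCommute a c) (hb : AntiCommute b c) : AntiCommute (a - b) c :=
  (ha.symm.sub_right hb.symm).symm

lemma smul_left (r : R) (h : AntiCommute a b) : AntiCommute (r • a) b :=
  (h.symm.smul_right r).symm

end AntiCommute

lemma prod_map_mul_of_forall_anticommute {ι : Type*} (g : ι → E) (L : List ι) (x : E)
    (h : ∀ b ∈ L, AntiCommute (g b) x) :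
    (L.map g).prod * x = ((-1 : R) ^ L.length) • (x * (L.map g).prod) := by
  induction L with
  | nil => simp
  | cons b L ih =>
    rw [List.forall_mem_cons] at h
    rw [List.map_cons, List.prod_cons, mul_assoc, ih h.2, mul_smul_comm, ← mul_assoc, h.1,
      neg_mul, mul_assoc, List.length_cons, pow_succ, mul_neg_one, neg_smul, smul_neg]

lemma prod_map_mul_of_mem_of_anticommute {ι : Type*} (g : ι → E)
    (hanti : Pairwise fun a b => AntiCommute (g a) (g b)) (hsq : ∀ a, g a * g a = 1)
    {L : List ι} (hL : L.Nodup) {a : ι} (ha : a ∈ L) :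
    (L.map g).prod * g a = -(((-1 : R) ^ L.length) • (g a * (L.map g).prod)) := by
  induction L with
  | nil => simp at ha
  | cons b L ih =>
    obtain ⟨hbL, hL⟩ := List.nodup_cons.mp hL
    rw [List.map_cons, List.prod_cons, mul_assoc, List.length_cons, pow_succ, mul_neg_one,
      neg_smul, neg_neg]
    rcases List.mem_cons.mp ha with rfl | ha
    · rw [prod_map_mul_of_forall_anticommute (R := R) g L (g a)
        (fun c hc => hanti (ne_of_mem_of_not_mem hc hbL)), mul_smul_comm, ← mul_assoc, hsq,
        one_mul]
    · rw [ih hL ha, mul_neg, mul_smul_comm, ← mul_assoc,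
        hanti (ne_of_mem_of_not_mem ha hbL).symm, neg_mul, mul_assoc, smul_neg, neg_neg]

end AntiCommute

variable {n : ℕ}

lemma crea_apply (i : Fin n) (x : Polyform n) :
    crea n i x = ExteriorAlgebra.ι ℂ (Pi.single i 1) * x := rfl

lemma anni_one (i : Fin n) : anni n i 1 = 0 :=
  CliffordAlgebra.contractLeft_one _ _

lemma crea_anticommute (i j : Fin n) : AntiCommute (crea n i) (crea n j) :=
  LinearMap.ext fun x => by
    rw [Module.End.mul_apply, LinearMap.neg_apply, Module.End.mul_apply, crea_apply, crea_apply,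
      crea_apply, crea_apply, ← mul_assoc, ← mul_assoc,
      CliffordAlgebra.ι_mul_ι_comm_of_isOrtho (QuadraticMap.IsOrtho.all _ _), neg_mul]

lemma crea_mul_self (i : Fin n) : crea n i * crea n i = 0 :=
  LinearMap.ext fun x => by
    simp only [Module.End.mul_apply, crea_apply, ← mul_assoc, ExteriorAlgebra.ι_sq_zero,
      zero_mul, LinearMap.zero_apply]

lemma anni_anticommute (i j : Fin n) : AntiCommute (anni n i) (anni n j) :=
  LinearMap.ext fun _ => CliffordAlgebra.contractLeft_comm _ _ _

lemma anni_mul_self (i : Fin n) : anni n i * anni n i = 0 :=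
  LinearMap.ext fun _ => CliffordAlgebra.contractLeft_contractLeft _ _

lemma anni_crea_apply (i j : Fin n) (x : Polyform n) :
    anni n i (crea n j x) = (Pi.single j 1 : Fin n → ℂ) i • x - crea n j (anni n i x) :=
  CliffordAlgebra.contractLeft_ι_mul _ _ _

lemma anni_mul_crea_self (i : Fin n) : anni n i * crea n i = 1 - crea n i * anni n i :=
  LinearMap.ext fun x => by simp [anni_crea_apply]

lemma anni_anticommute_crea {i j : Fin n} (h : i ≠ j) : AntiCommute (anni n i) (crea n j) :=
  LinearMap.ext fun x => by simp [anni_crea_apply, h]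

lemma crea_anticommute_anni {i j : Fin n} (h : i ≠ j) : AntiCommute (crea n i) (anni n j) :=
  (anni_anticommute_crea h.symm).symm

def lowIndex (i : Fin n) : Fin (2 * n) := ⟨i, by omega⟩

def highIndex (i : Fin n) : Fin (2 * n) := ⟨n + i, by omega⟩

lemma lowIndex_injective : Function.Injective (lowIndex (n := n)) :=
  fun _ _ h => Fin.ext (by simpa [lowIndex] using congrArg Fin.val h)

lemma highIndex_injective : Function.Injective (highIndex (n := n)) :=
  fun _ _ h => Fin.ext (by simpa [highIndex] using congrArg Fin.val h)

lemma lowIndex_ne_highIndex (i j : Fin n) : lowIndex i ≠ highIndex j :=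
  fun h => by have := congrArg Fin.val h; simp only [lowIndex, highIndex] at this; omega

lemma lowIndex_or_highIndex (A : Fin (2 * n)) :
    (∃ i, A = lowIndex i) ∨ ∃ i, A = highIndex i := by
  by_cases h : (A : ℕ) < n
  · exact Or.inl ⟨⟨A, h⟩, rfl⟩
  · exact Or.inr ⟨⟨A - n, by omega⟩, Fin.ext (by simp only [highIndex]; omega)⟩

lemma Gam_lowIndex (i : Fin n) : Gam n (lowIndex i) = crea n i + anni n i := by
  simp [Gam, lowIndex]

lemma Gam_highIndex (i : Fin n) : Gam n (highIndex i) = Complex.I • (crea n i - anni n i) := by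
  simp [Gam, highIndex]

lemma crea_add_anni_anticommute_crea_sub_anni (i : Fin n) :
    AntiCommute (crea n i + anni n i) (crea n i - anni n i) := by
  simp only [AntiCommute, add_mul, mul_sub, sub_mul, mul_add, crea_mul_self, anni_mul_self]
  abel

lemma Gam_pairwise_anticommute : Pairwise fun A B => AntiCommute (Gam n A) (Gam n B) := by
  intro A B h
  rcases lowIndex_or_highIndex A with ⟨i, rfl⟩ | ⟨i, rfl⟩ <;>
    rcases lowIndex_or_highIndex B with ⟨j, rfl⟩ | ⟨j, rfl⟩
  · have hij : i ≠ j := fun e => h (e ▸ rfl)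
    rw [Gam_lowIndex, Gam_lowIndex]
    exact ((crea_anticommute i j).add_left (anni_anticommute_crea hij)).add_right
      ((crea_anticommute_anni hij).add_left (anni_anticommute i j))
  · rw [Gam_lowIndex, Gam_highIndex]
    refine AntiCommute.smul_right _ ?_
    obtain rfl | hij := eq_or_ne i j
    · exact crea_add_anni_anticommute_crea_sub_anni i
    · exact ((crea_anticommute i j).add_left (anni_anticommute_crea hij)).sub_right
        ((crea_anticommute_anni hij).add_left (anni_anticommute i j))
  · rw [Gam_highIndex, Gam_lowIndex]
    refine AntiCommute.smul_left _ ?_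
    obtain rfl | hij := eq_or_ne i j
    · exact (crea_add_anni_anticommute_crea_sub_anni i).symm
    · exact ((crea_anticommute i j).sub_left (anni_anticommute_crea hij)).add_right
        ((crea_anticommute_anni hij).sub_left (anni_anticommute i j))
  · have hij : i ≠ j := fun e => h (e ▸ rfl)
    rw [Gam_highIndex, Gam_highIndex]
    refine (AntiCommute.smul_left _ (AntiCommute.smul_right _ ?_))
    exact ((crea_anticommute i j).sub_left (anni_anticommute_crea hij)).sub_right
      ((crea_anticommute_anni hij).sub_left (anni_anticommute i j))

lemma Gam_mul_self (A : Fin (2 * n)) : Gam n A * Gam n A = 1 := by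
  rcases lowIndex_or_highIndex A with ⟨i, rfl⟩ | ⟨i, rfl⟩
  · rw [Gam_lowIndex, add_mul, mul_add, mul_add, crea_mul_self, anni_mul_self,
      anni_mul_crea_self]
    abel
  · rw [Gam_highIndex, smul_mul_smul_comm, Complex.I_mul_I, sub_mul, mul_sub, mul_sub,
      crea_mul_self, anni_mul_self, anni_mul_crea_self]
    module

lemma basisMonomial_nil : basisMonomial n [] = 1 := rfl

lemma basisMonomial_cons (i : Fin n) (l : List (Fin n)) :
    basisMonomial n (i :: l) = crea n i (basisMonomial n l) := rfl

lemma basisMonomial_append (l l' : List (Fin n)) :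
    basisMonomial n (l ++ l') = basisMonomial n l * basisMonomial n l' := by
  simp [basisMonomial]

lemma span_basisMonomial : Submodule.span ℂ (Set.range (basisMonomial n)) = ⊤ := by
  set M := Submodule.span ℂ (Set.range (basisMonomial n))
  have hMM : M * M ≤ M := by
    rw [Submodule.span_mul_span, Submodule.span_le]
    rintro _ ⟨_, ⟨l, rfl⟩, _, ⟨l', rfl⟩, rfl⟩
    exact Submodule.subset_span ⟨l ++ l', basisMonomial_append l l'⟩
  refine eq_top_iff.mpr ?_
  rintro x -
  induction x using CliffordAlgebra.induction with
  | algebraMap r =>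
    rw [Algebra.algebraMap_eq_smul_one]
    exact M.smul_mem r (Submodule.subset_span ⟨[], rfl⟩)
  | ι v =>
    rw [← Finset.univ_sum_single v, map_sum]
    refine M.sum_mem fun i _ => ?_
    rw [← mul_one (v i), ← smul_eq_mul, Pi.single_smul', map_smul]
    exact M.smul_mem _ (Submodule.subset_span ⟨[i], mul_one _⟩)
  | mul a b ha hb => exact hMM (Submodule.mul_mem_mul ha hb)
  | add a b ha hb => exact M.add_mem ha hb

lemma prod_crea_apply_one (l : List (Fin n)) : (l.map (crea n)).prod 1 = basisMonomial n l := by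
  induction l with
  | nil => rfl
  | cons i l ih => rw [List.map_cons, List.prod_cons, Module.End.mul_apply, ih, basisMonomial_cons]

lemma anni_basisMonomial_of_not_mem {i : Fin n} {l : List (Fin n)} (h : i ∉ l) :
    anni n i (basisMonomial n l) = 0 := by
  induction l with
  | nil => exact anni_one i
  | cons j l ih =>
    rw [List.mem_cons, not_or] at h
    rw [basisMonomial_cons, ← Module.End.mul_apply, anni_anticommute_crea h.1,
      LinearMap.neg_apply, Module.End.mul_apply, ih h.2, map_zero, neg_zero]

lemma prod_Gam_lowIndex_one {l : List (Fin n)} (hl : l.Nodup) :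
    ((l.map lowIndex).map (Gam n)).prod 1 = basisMonomial n l := by
  induction l with
  | nil => rfl
  | cons i l ih =>
    obtain ⟨hil, hl⟩ := List.nodup_cons.mp hl
    rw [List.map_cons, List.map_cons, List.prod_cons, Module.End.mul_apply, ih hl,
      Gam_lowIndex, LinearMap.add_apply, anni_basisMonomial_of_not_mem hil, add_zero,
      basisMonomial_cons]

lemma prod_Gam_highIndex_one {l : List (Fin n)} (hl : l.Nodup) :
    ((l.map highIndex).map (Gam n)).prod 1 = Complex.I ^ l.length • basisMonomial n l := by
  induction l with
  | nil => simp [basisMonomial_nil]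
  | cons i l ih =>
    obtain ⟨hil, hl⟩ := List.nodup_cons.mp hl
    rw [List.map_cons, List.map_cons, List.prod_cons, Module.End.mul_apply, ih hl, map_smul,
      Gam_highIndex, LinearMap.smul_apply, LinearMap.sub_apply,
      anni_basisMonomial_of_not_mem hil, sub_zero, ← basisMonomial_cons, smul_smul,
      List.length_cons, pow_succ]

noncomputable def volForm (n : ℕ) : Polyform n := basisMonomial n (List.finRange n)

lemma eq_prod_crea_prod_anni_apply {L : List (Fin n)} (hL : L.Nodup) {x : Polyform n}
    (hx : ∀ i ∈ L, crea n i x = 0) :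
    x = (L.map (crea n)).prod ((L.reverse.map (anni n)).prod x) := by
  induction L generalizing x with
  | nil => simp
  | cons i L ih =>
    obtain ⟨hiL, hL⟩ := List.nodup_cons.mp hL
    rw [List.forall_mem_cons] at hx
    have hx_eq : x = crea n i (anni n i x) := by
      simpa [hx.1, sub_eq_zero] using (LinearMap.congr_fun (anni_mul_crea_self i) x).symm
    have hy : ∀ j ∈ L, crea n j (anni n i x) = 0 := fun j hj => by
      simpa [hx.2 j hj] using
        (LinearMap.congr_fun (anni_anticommute_crea (ne_of_mem_of_not_mem hj hiL).symm) x).symm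
    conv_lhs => rw [hx_eq, ih hL hy]
    simp [List.prod_append]

lemma prod_crea_mul_crea_of_mem {L : List (Fin n)} {j : Fin n} (h : j ∈ L) :
    (L.map (crea n)).prod * crea n j = 0 := by
  induction L with
  | nil => simp at h
  | cons i L ih =>
    rw [List.map_cons, List.prod_cons, mul_assoc]
    by_cases hj : j ∈ L
    · rw [ih hj, mul_zero]
    · obtain rfl : j = i := (List.mem_cons.mp h).resolve_right hj
      rw [prod_map_mul_of_forall_anticommute (R := ℂ) _ _ _ fun k _ => crea_anticommute k j,
        mul_smul_comm, ← mul_assoc, crea_mul_self, zero_mul, smul_zero]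

lemma range_prod_crea_le_span_volForm :
    LinearMap.range ((List.finRange n).map (crea n)).prod ≤ Submodule.span ℂ {volForm n} := by
  rw [LinearMap.range_eq_map, ← span_basisMonomial (n := n), Submodule.map_span,
    Submodule.span_le]
  rintro _ ⟨_, ⟨l, rfl⟩, rfl⟩
  cases l with
  | nil => exact (prod_crea_apply_one _).symm ▸ Submodule.mem_span_singleton_self _
  | cons j l =>
    rw [basisMonomial_cons, ← Module.End.mul_apply,
      prod_crea_mul_crea_of_mem (List.mem_finRange j), LinearMap.zero_apply]
    exact Submodule.zero_mem _

lemma exists_eq_smul_volForm {x : Polyform n} (hx : ∀ i, crea n i x = 0) :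
    ∃ z : ℂ, x = z • volForm n := by
  have hmem := range_prod_crea_le_span_volForm (LinearMap.mem_range_self _
    (((List.finRange n).reverse.map (anni n)).prod x))
  rw [← eq_prod_crea_prod_anni_apply (List.nodup_finRange n) fun i _ => hx i,
    Submodule.mem_span_singleton] at hmem
  obtain ⟨z, hz⟩ := hmem
  exact ⟨z, hz.symm⟩

def IntertwinesGam (e : ℂ) (T : Polyform n →ₗ⋆[ℂ] Polyform n) : Prop :=
  ∀ A ψ, T (Gam n A ψ) = e • Gam n A (T ψ)

namespace IntertwinesGam

variable {e : ℂ} {S T : Polyform n →ₗ⋆[ℂ] Polyform n} (hT : IntertwinesGam e T)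
include hT

lemma smul (z : ℂ) : IntertwinesGam e (z • T) := fun A ψ => by
  rw [LinearMap.smul_apply, LinearMap.smul_apply, hT, map_smul, smul_comm]

lemma map_crea_add_anni (i : Fin n) (ψ : Polyform n) :
    T (crea n i ψ) + T (anni n i ψ) = e • (crea n i (T ψ) + anni n i (T ψ)) := by
  simpa [Gam_lowIndex] using hT (lowIndex i) ψ

lemma map_crea_sub_anni (i : Fin n) (ψ : Polyform n) :
    T (crea n i ψ) - T (anni n i ψ) = -(e • (crea n i (T ψ) - anni n i (T ψ))) := by
  have h := hT (highIndex i) ψ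
  rw [Gam_highIndex, LinearMap.smul_apply, LinearMap.smul_apply, map_smulₛₗ, Complex.conj_I,
    LinearMap.sub_apply, LinearMap.sub_apply, map_sub] at h
  refine smul_right_injective _ (neg_ne_zero.mpr Complex.I_ne_zero) ?_
  dsimp only
  rw [h]
  module

lemma map_crea (i : Fin n) (ψ : Polyform n) : T (crea n i ψ) = e • anni n i (T ψ) := by
  linear_combination (norm := module)
    (1 / 2 : ℂ) • hT.map_crea_add_anni i ψ + (1 / 2 : ℂ) • hT.map_crea_sub_anni i ψ

lemma map_anni (i : Fin n) (ψ : Polyform n) : T (anni n i ψ) = e • crea n i (T ψ) := by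
  linear_combination (norm := module)
    (1 / 2 : ℂ) • hT.map_crea_add_anni i ψ - (1 / 2 : ℂ) • hT.map_crea_sub_anni i ψ

lemma map_basisMonomial (l : List (Fin n)) :
    T (basisMonomial n l) = e ^ l.length • (l.map (anni n)).prod (T 1) := by
  induction l with
  | nil => simp [basisMonomial_nil]
  | cons i l ih =>
    rw [basisMonomial_cons, hT.map_crea, ih, map_smul, List.map_cons, List.prod_cons,
      Module.End.mul_apply, smul_smul, List.length_cons, pow_succ']

lemma eq_of_map_one (hS : IntertwinesGam e S) (h : T 1 = S 1) : T = S :=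
  LinearMap.ext_on_range span_basisMonomial fun l => by
    rw [hT.map_basisMonomial, hS.map_basisMonomial, h]

lemma crea_map_one_eq_zero (he : e ≠ 0) (i : Fin n) : crea n i (T 1) = 0 := by
  have h := hT.map_anni i 1
  rw [anni_one, map_zero, eq_comm, smul_eq_zero] at h
  exact h.resolve_left he

end IntertwinesGam

namespace IsConjugation

variable {st : Polyform n → Polyform n} (hst : IsConjugation n st)
include hst

noncomputable def toStarLinearMap : Polyform n →ₗ⋆[ℂ] Polyform n where
  toFun := st
  map_add' := hst.1
  map_smul' := hst.2.1

@[simp]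
lemma toStarLinearMap_apply (x : Polyform n) : hst.toStarLinearMap x = st x := rfl

lemma map_one : st 1 = 1 := hst.2.2 []

lemma map_crea (i : Fin n) (x : Polyform n) : st (crea n i x) = crea n i (st x) := by
  have : hst.toStarLinearMap.comp (crea n i) = (crea n i).comp hst.toStarLinearMap :=
    LinearMap.ext_on_range span_basisMonomial fun l => by
      simp only [LinearMap.comp_apply]
      exact (hst.2.2 (i :: l)).trans (congrArg (crea n i) (hst.2.2 l).symm)
  exact LinearMap.congr_fun this x

lemma map_anni_basisMonomial (i : Fin n) (l : List (Fin n)) :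
    st (anni n i (basisMonomial n l)) = anni n i (basisMonomial n l) := by
  induction l with
  | nil => rw [basisMonomial_nil, anni_one]; exact hst.toStarLinearMap.map_zero
  | cons j l ih =>
    have hsub : ∀ x y, st (x - y) = st x - st y := hst.toStarLinearMap.map_sub
    rw [basisMonomial_cons, anni_crea_apply, hsub, hst.map_crea, ih, hst.2.1, hst.2.2]
    simp [Pi.single_apply, apply_ite]

lemma map_anni (i : Fin n) (x : Polyform n) : st (anni n i x) = anni n i (st x) := by
  have : hst.toStarLinearMap.comp (anni n i) = (anni n i).comp hst.toStarLinearMap :=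
    LinearMap.ext_on_range span_basisMonomial fun l => by
      simp only [LinearMap.comp_apply]
      exact (hst.map_anni_basisMonomial i l).trans (congrArg (anni n i) (hst.2.2 l).symm)
  exact LinearMap.congr_fun this x

lemma map_Gam_lowIndex (i : Fin n) (x : Polyform n) :
    st (Gam n (lowIndex i) x) = Gam n (lowIndex i) (st x) := by
  rw [Gam_lowIndex, LinearMap.add_apply, LinearMap.add_apply, hst.1, hst.map_crea, hst.map_anni]

lemma map_Gam_highIndex (i : Fin n) (x : Polyform n) :
    st (Gam n (highIndex i) x) = -Gam n (highIndex i) (st x) := by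
  have hsub : ∀ x y, st (x - y) = st x - st y := hst.toStarLinearMap.map_sub
  rw [Gam_highIndex, LinearMap.smul_apply, LinearMap.smul_apply, hst.2.1, Complex.conj_I,
    LinearMap.sub_apply, LinearMap.sub_apply, hsub, hst.map_crea, hst.map_anni, neg_smul]

noncomputable def rop : Polyform n →ₗ⋆[ℂ] Polyform n :=
  (((List.finRange n).map lowIndex).map (Gam n)).prod.comp hst.toStarLinearMap

noncomputable def rop' : Polyform n →ₗ⋆[ℂ] Polyform n :=
  (((List.finRange n).map highIndex).map (Gam n)).prod.comp hst.toStarLinearMap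

lemma coe_rop : ⇑hst.rop = Rop n st := by
  rw [rop, List.map_map]
  rfl

lemma coe_rop' : ⇑hst.rop' = Rop' n st := by
  rw [rop', List.map_map]
  rfl

lemma rop_one : hst.rop 1 = volForm n := by
  rw [rop, LinearMap.comp_apply]
  exact (congrArg _ hst.map_one).trans (prod_Gam_lowIndex_one (List.nodup_finRange n))

lemma rop'_one : hst.rop' 1 = Complex.I ^ n • volForm n := by
  rw [rop', LinearMap.comp_apply]
  exact (congrArg _ hst.map_one).trans
    ((prod_Gam_highIndex_one (List.nodup_finRange n)).trans (by rw [List.length_finRange]; rfl))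

lemma intertwinesGam_rop : IntertwinesGam (-(-1) ^ n) hst.rop := by
  intro A ψ
  have hL := (List.nodup_finRange n).map (lowIndex_injective (n := n))
  simp only [rop, LinearMap.comp_apply, toStarLinearMap_apply]
  rcases lowIndex_or_highIndex A with ⟨i, rfl⟩ | ⟨i, rfl⟩
  · rw [hst.map_Gam_lowIndex, ← Module.End.mul_apply,
      prod_map_mul_of_mem_of_anticommute (R := ℂ) _ Gam_pairwise_anticommute Gam_mul_self hL
        (List.mem_map_of_mem (List.mem_finRange i))]
    simp
  · rw [hst.map_Gam_highIndex, map_neg, ← Module.End.mul_apply,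
      prod_map_mul_of_forall_anticommute (R := ℂ)]
    · simp
    · simp only [List.mem_map, List.mem_finRange, true_and, forall_exists_index]
      rintro _ j rfl
      exact Gam_pairwise_anticommute (lowIndex_ne_highIndex j i)

lemma intertwinesGam_rop' : IntertwinesGam ((-1) ^ n) hst.rop' := by
  intro A ψ
  have hL := (List.nodup_finRange n).map (highIndex_injective (n := n))
  simp only [rop', LinearMap.comp_apply, toStarLinearMap_apply]
  rcases lowIndex_or_highIndex A with ⟨i, rfl⟩ | ⟨i, rfl⟩
  · rw [hst.map_Gam_lowIndex, ← Module.End.mul_apply,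
      prod_map_mul_of_forall_anticommute (R := ℂ)]
    · simp
    · simp only [List.mem_map, List.mem_finRange, true_and, forall_exists_index]
      rintro _ j rfl
      exact Gam_pairwise_anticommute (lowIndex_ne_highIndex i j).symm
  · rw [hst.map_Gam_highIndex, map_neg, ← Module.End.mul_apply,
      prod_map_mul_of_mem_of_anticommute (R := ℂ) _ Gam_pairwise_anticommute Gam_mul_self hL
        (List.mem_map_of_mem (List.mem_finRange i))]
    simp

end IsConjugation

theorem reality_conditions_unique_general (n : ℕ) (st : Polyform n → Polyform n)
    (hst : IsConjugation n st) (T : Polyform n → Polyform n)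
    (hTadd : ∀ x y, T (x + y) = T x + T y)
    (hTsmul : ∀ (z : ℂ) (x : Polyform n), T (z • x) = (starRingEnd ℂ) z • T x)
    (ε : ℝ) (hε : ε = 1 ∨ ε = -1)
    (hTΓ : ∀ (A : Fin (2 * n)) (ψ : Polyform n),
      T (Gam n A ψ) = (ε : ℂ) • Gam n A (T ψ)) :
    ∃ z : ℂ, T = (fun ψ => z • Rop n st ψ) ∨ T = (fun ψ => z • Rop' n st ψ) := by
  let Tₗ : Polyform n →ₗ⋆[ℂ] Polyform n := ⟨⟨T, hTadd⟩, hTsmul⟩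
  have hT : IntertwinesGam (ε : ℂ) Tₗ := hTΓ
  obtain ⟨z, hz⟩ := exists_eq_smul_volForm <|
    hT.crea_map_one_eq_zero (by rcases hε with rfl | rfl <;> norm_num)
  have hsign : (ε : ℂ) = -(-1) ^ n ∨ (ε : ℂ) = (-1) ^ n := by
    rcases hε with rfl | rfl <;> rcases neg_one_pow_eq_or ℂ n with h | h <;> simp [h]
  rcases hsign with h | h
  · refine ⟨z, Or.inl ?_⟩
    have hR : Tₗ = z • hst.rop :=
      hT.eq_of_map_one ((h ▸ hst.intertwinesGam_rop).smul z) (by simp [hst.rop_one, hz])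
    rw [← hst.coe_rop]
    exact funext (LinearMap.congr_fun hR)
  · refine ⟨z * (-Complex.I) ^ n, Or.inr ?_⟩
    have hR : Tₗ = (z * (-Complex.I) ^ n) • hst.rop' :=
      hT.eq_of_map_one ((h ▸ hst.intertwinesGam_rop').smul _) (by
        rw [LinearMap.smul_apply, hst.rop'_one, smul_smul, mul_assoc, ← mul_pow]
        simp [hz])
    rw [← hst.coe_rop']
    exact funext (LinearMap.congr_fun hR)

/-- Up to a complex scalar, `R` and `R'` are the only reality conditions: any nonzero
`ℂ`-antilinear map `T` on polyforms that commutes or anticommutes with all the `Γ_A`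
is a complex multiple of `R` or of `R'`. -/
theorem reality_conditions_unique (n : ℕ) (hn : 1 ≤ n) (st : Polyform n → Polyform n)
    (hst : IsConjugation n st) (T : Polyform n → Polyform n)
    (hTadd : ∀ x y, T (x + y) = T x + T y)
    (hTsmul : ∀ (z : ℂ) (x : Polyform n), T (z • x) = (starRingEnd ℂ) z • T x)
    (hT0 : T ≠ 0) (ε : ℝ) (hε : ε = 1 ∨ ε = -1)
    (hTΓ : ∀ (A : Fin (2 * n)) (ψ : Polyform n),
      T (Gam n A ψ) = (ε : ℂ) • Gam n A (T ψ)) :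
    ∃ z : ℂ, T = (fun ψ => z • Rop n st ψ) ∨ T = (fun ψ => z • Rop' n st ψ) :=
  reality_conditions_unique_general n st hst T hTadd hTsmul ε hε hTΓ
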